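/- Bisimulation game (Lemma 1): Let S = (P, Act, →) be a labeled transition system and p0, q0 ∈ P. Then p0 and q0 are bisimilar if and only if the defender wins the spectroscopy energy game G△ from position [p0,{q0}]_a for every initial energy budget e0 ∈ En_∞. -/

import Mathlib

/-! ### Energies and energy updates -/

/-- (Finite) energies: vectors in `ℕ^N`. -/
abbrev Energy (N : ℕ) := Fin N → ℕ

/-- Extended energies: vectors in `(ℕ ∪ {∞})^N`. -/
abbrev EnergyE (N : ℕ) := Fin N → ℕ∞

/-- Embedding of energies into extended energies. -/
def Energy.toE {N : ℕ} (e : Energy N) : EnergyE N := fun k => (e k : ℕ∞)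

/-- A component of an energy update: `-1`, `0`, or `min_D`. -/
inductive UpdComp (N : ℕ) : Type where
  | dec : UpdComp N
  | zero : UpdComp N
  | minOf (D : Finset (Fin N)) : UpdComp N
deriving DecidableEq

/-- An energy update: a vector of update components, where a `min_D`
component at index `k` must satisfy `k ∈ D`. -/
structure EnergyUpdate (N : ℕ) : Type where
  comp : Fin N → UpdComp N
  valid : ∀ k D, comp k = UpdComp.minOf D → k ∈ D

open Classical in
/-- Applying an energy update to an extended energy: component `k` becomes
`e k - 1`, `e k`, or `min_{d ∈ D} e d`; the result is undefined (`none`) if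
some component would become negative. -/
noncomputable def applyUpdE {N : ℕ} (e : EnergyE N) (u : EnergyUpdate N) :
    Option (EnergyE N) :=
  if ∀ k, u.comp k = UpdComp.dec → e k ≠ 0 then
    some (fun k =>
      match u.comp k with
      | UpdComp.dec => e k - 1
      | UpdComp.zero => e k
      | UpdComp.minOf D => (insert k D).inf' (Finset.insert_nonempty k D) e)
  else none

open Classical in
/-- Applying an energy update to a (finite) energy. -/
noncomputable def applyUpdN {N : ℕ} (e : Energy N) (u : EnergyUpdate N) :
    Option (Energy N) :=
  if ∀ k, u.comp k = UpdComp.dec → e k ≠ 0 then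
    some (fun k =>
      match u.comp k with
      | UpdComp.dec => e k - 1
      | UpdComp.zero => e k
      | UpdComp.minOf D => (insert k D).inf' (Finset.insert_nonempty k D) e)
  else none

/-! ### Declining energy games -/

/-- A declining `N`-dimensional energy game: positions (partitioned into defender
positions and attacker positions), moves, and a weight function assigning an
energy update to each move. -/
structure EnergyGame (N : ℕ) where
  Pos : Type
  defender : Pos → Prop
  move : Pos → Pos → Prop
  weight : Pos → Pos → EnergyUpdate N

/-- The attacker wins from position `g` with (extended) initial energy budget `e`:
inductive (attractor) characterization of the existence of an attacker winning
strategy.  (The attacker wins exactly the finite plays that get stuck at a defender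
position without the energy having become negative, so the attacker has a winning
strategy iff they can force the play into a stuck defender position in finitely
many steps while keeping all energy levels defined.) -/
inductive AttackerWins {N : ℕ} (G : EnergyGame N) : G.Pos → EnergyE N → Prop where
  | attack {g g' : G.Pos} {e e' : EnergyE N} :
      ¬ G.defender g → G.move g g' →
      applyUpdE e (G.weight g g') = some e' →
      AttackerWins G g' e' → AttackerWins G g e
  | defend {g : G.Pos} {e : EnergyE N} :
      G.defender g →
      (∀ g', G.move g g' → (applyUpdE e (G.weight g g')).isSome) →
      (∀ g' e', G.move g g' → applyUpdE e (G.weight g g') = some e' →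
        AttackerWins G g' e') →
      AttackerWins G g e
/-! ### The spectroscopy energy game -/

/-- Lifting of transition steps to sets of processes:
`stepSet step Q a = {q' | ∃ q ∈ Q, q →a q'}`. -/
def stepSet {P : Type} {Act : Type} (step : P → Act → P → Prop) (Q : Set P) (a : Act) :
    Set P := {q' | ∃ q ∈ Q, step q a q'}

/-- The actions enabled initially for a process `p`: `I(p)`. -/
def enabledActs {P : Type} {Act : Type} (step : P → Act → P → Prop) (p : P) : Set Act :=
  {a | ∃ p', step p a p'}

/-- Positions of the spectroscopy energy game: attacker positions `[p,Q]_a`,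
attacker clause positions `[p,q]_a^∧`, and defender positions `(p,Q,Q*)_d`. -/
inductive SpecPos (P : Type) : Type where
  | att (p : P) (Q : Set P)
  | attConj (p q : P)
  | defp (p : P) (Q Qs : Set P)

/-- Update `(-1,0,0,0,0,0)` of observation moves. -/
def uObs : EnergyUpdate 6 :=
  ⟨![.dec, .zero, .zero, .zero, .zero, .zero], by decide⟩

/-- Update `(0,-1,0,0,0,0)` of conjunction challenges. -/
def uConj : EnergyUpdate 6 :=
  ⟨![.zero, .dec, .zero, .zero, .zero, .zero], by decide⟩

/-- Update `(min_{1,3},0,0,0,0,0)` of conjunction revivals. -/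
def uRevival : EnergyUpdate 6 :=
  ⟨![.minOf {0, 2}, .zero, .zero, .zero, .zero, .zero], by decide⟩

/-- Update `(0,0,0,min_{3,4},0,0)` of conjunction answers. -/
def uAnswer : EnergyUpdate 6 :=
  ⟨![.zero, .zero, .zero, .minOf {2, 3}, .zero, .zero], by decide⟩

/-- Update `(min_{1,4},0,0,0,0,0)` of positive decisions. -/
def uPos : EnergyUpdate 6 :=
  ⟨![.minOf {0, 3}, .zero, .zero, .zero, .zero, .zero], by decide⟩

/-- Update `(min_{1,5},0,0,0,0,-1)` of negative decisions. -/
def uNeg : EnergyUpdate 6 :=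
  ⟨![.minOf {0, 4}, .zero, .zero, .zero, .zero, .dec], by decide⟩

/-- The moves of the spectroscopy energy game `G△`. -/
inductive SpecMove {P : Type} {Act : Type} (step : P → Act → P → Prop) :
    SpecPos P → SpecPos P → Prop where
  | obs {p p' : P} {Q : Set P} {a : Act} :
      step p a p' →
      SpecMove step (.att p Q) (.att p' (stepSet step Q a))
  | conjChallenge {p : P} {Q Qs : Set P} :
      Qs ⊆ Q →
      SpecMove step (.att p Q) (.defp p (Q \ Qs) Qs)
  | conjRevival {p : P} {Q Qs : Set P} :
      Qs ≠ ∅ →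
      SpecMove step (.defp p Q Qs) (.att p Qs)
  | conjAnswer {p q : P} {Q Qs : Set P} :
      q ∈ Q →
      SpecMove step (.defp p Q Qs) (.attConj p q)
  | posDecision {p q : P} :
      SpecMove step (.attConj p q) (.att p {q})
  | negDecision {p q : P} :
      p ≠ q →
      SpecMove step (.attConj p q) (.att q {p})

/-- The moves of the clever spectroscopy game `G▲`: like `SpecMove`, with conjunction
challenges restricted to the four subsets
`∅`, `{q ∈ Q | I(q) ⊆ I(p)}`, `{q ∈ Q | I(p) ⊆ I(q)}`, `{q ∈ Q | I(p) = I(q)}`. -/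
inductive CleverMove {P : Type} {Act : Type} (step : P → Act → P → Prop) :
    SpecPos P → SpecPos P → Prop where
  | obs {p p' : P} {Q : Set P} {a : Act} :
      step p a p' →
      CleverMove step (.att p Q) (.att p' (stepSet step Q a))
  | conjChallenge {p : P} {Q Qs : Set P} :
      (Qs = ∅ ∨
       Qs = {q ∈ Q | enabledActs step q ⊆ enabledActs step p} ∨
       Qs = {q ∈ Q | enabledActs step p ⊆ enabledActs step q} ∨
       Qs = {q ∈ Q | enabledActs step p = enabledActs step q}) →
      CleverMove step (.att p Q) (.defp p (Q \ Qs) Qs)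
  | conjRevival {p : P} {Q Qs : Set P} :
      Qs ≠ ∅ →
      CleverMove step (.defp p Q Qs) (.att p Qs)
  | conjAnswer {p q : P} {Q Qs : Set P} :
      q ∈ Q →
      CleverMove step (.defp p Q Qs) (.attConj p q)
  | posDecision {p q : P} :
      CleverMove step (.attConj p q) (.att p {q})
  | negDecision {p q : P} :
      p ≠ q →
      CleverMove step (.attConj p q) (.att q {p})

open Classical in
/-- The weight function of the spectroscopy energy game (well-defined on all moves). -/
noncomputable def specWeight {P : Type} : SpecPos P → SpecPos P → EnergyUpdate 6
  | .att _ _, .att _ _ => uObs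
  | .att _ _, .defp _ _ _ => uConj
  | .defp _ _ _, .att _ _ => uRevival
  | .defp _ _ _, .attConj _ _ => uAnswer
  | .attConj p _, .att p' _ => if p = p' then uPos else uNeg
  | _, _ => uObs

/-- The spectroscopy energy game `G△` of a labeled transition system. -/
noncomputable def specGame {P : Type} {Act : Type} (step : P → Act → P → Prop) :
    EnergyGame 6 where
  Pos := SpecPos P
  defender g := ∃ p Q Qs, g = SpecPos.defp p Q Qs
  move := SpecMove step
  weight := specWeight

/-- The clever spectroscopy energy game `G▲` of a labeled transition system. -/
noncomputable def cleverGame {P : Type} {Act : Type} (step : P → Act → P → Prop) :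
    EnergyGame 6 where
  Pos := SpecPos P
  defender g := ∃ p Q Qs, g = SpecPos.defp p Q Qs
  move := CleverMove step
  weight := specWeight

/-- `p0` and `q0` are bisimilar: some symmetric relation containing `(p0,q0)`
has the simulation property. -/
def Bisimilar {P Act : Type} (step : P → Act → P → Prop) (p0 q0 : P) : Prop :=
  ∃ R : P → P → Prop, R p0 q0 ∧ (∀ p q, R p q → R q p) ∧
    (∀ p q, R p q → ∀ a p', step p a p' → ∃ q', step q a q' ∧ R p' q')

/-- The all-infinite energy budget. -/
def topE : EnergyE 6 := fun _ => ⊤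

lemma applyUpdE_top (u : EnergyUpdate 6) : applyUpdE topE u = some topE := by
  unfold applyUpdE
  rw [if_pos]
  · congr 1
    funext k
    cases h : u.comp k with
    | dec => simp [topE]
    | zero => simp [topE]
    | minOf D => simp [topE]; exact le_antisymm le_top (Finset.le_inf' _ _ (fun _ _ => le_rfl))
  · intro k _
    simp [topE]

/-- Invariant maintained by the defender when `R` is a bisimulation. -/
def SpecInv {P : Type} (R : P → P → Prop) : SpecPos P → Prop
  | .att p Q => ∃ q ∈ Q, R p q
  | .attConj p q => R p q
  | .defp p Q Qs => ∃ q, (q ∈ Q ∨ q ∈ Qs) ∧ R p q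

lemma no_attack {P Act : Type} {step : P → Act → P → Prop} {R : P → P → Prop}
    (hsym : ∀ p q, R p q → R q p)
    (hsim : ∀ p q, R p q → ∀ a p', step p a p' → ∃ q', step q a q' ∧ R p' q')
    {g : (specGame step).Pos} {e : EnergyE 6}
    (h : AttackerWins (specGame step) g e) : ¬ SpecInv R g := by
  induction h with
  | @attack g g' e e' hnd hm happ _ ih =>
    intro hinv
    apply ih
    cases hm with
    | @obs p p' Q a hstep =>
      obtain ⟨q, hq, hR⟩ := hinv
      obtain ⟨q', hq', hR'⟩ := hsim p q hR a p' hstep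
      exact ⟨q', ⟨q, hq, hq'⟩, hR'⟩
    | @conjChallenge p Q Qs hsub =>
      obtain ⟨q, hq, hR⟩ := hinv
      by_cases hqs : q ∈ Qs
      · exact ⟨q, Or.inr hqs, hR⟩
      · exact ⟨q, Or.inl ⟨hq, hqs⟩, hR⟩
    | conjRevival h0 => exact absurd ⟨_, _, _, rfl⟩ hnd
    | conjAnswer h0 => exact absurd ⟨_, _, _, rfl⟩ hnd
    | posDecision => exact ⟨_, rfl, hinv⟩
    | @negDecision p q hpq => exact ⟨p, rfl, hsym p q hinv⟩
  | @defend g e hd hsome hall ih =>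
    intro hinv
    obtain ⟨p, Q, Qs, rfl⟩ := hd
    obtain ⟨q, hq | hq, hR⟩ := hinv
    · have hm : (specGame step).move (.defp p Q Qs) (.attConj p q) :=
        SpecMove.conjAnswer hq
      obtain ⟨e', he'⟩ := Option.isSome_iff_exists.mp (hsome _ hm)
      exact ih _ _ hm he' hR
    · have hne : Qs ≠ ∅ := fun h => by subst h; exact hq
      have hm : (specGame step).move (.defp p Q Qs) (.att p Qs) :=
        SpecMove.conjRevival hne
      obtain ⟨e', he'⟩ := Option.isSome_iff_exists.mp (hsome _ hm)
      exact ih _ _ hm he' ⟨q, hq, hR⟩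

lemma att_not_defender {P Act : Type} (step : P → Act → P → Prop) (p : P) (Q : Set P) :
    ¬ (specGame step).defender (SpecPos.att p Q) := by
  rintro ⟨_, _, _, h⟩; cases h

lemma attConj_not_defender {P Act : Type} (step : P → Act → P → Prop) (p q : P) :
    ¬ (specGame step).defender (SpecPos.attConj p q) := by
  rintro ⟨_, _, _, h⟩; cases h

/-- **Bisimulation game** (Lemma 1): `p0` and `q0` are bisimilar iff the defender
wins the spectroscopy energy game `G△` from `[p0,{q0}]_a` for every initial budget
`e0` (since the game is determined, the defender wins iff the attacker does not). -/
theorem bisimulation_game {P Act : Type} (step : P → Act → P → Prop) (p0 q0 : P) :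
    Bisimilar step p0 q0 ↔
      ∀ e0 : EnergyE 6, ¬ AttackerWins (specGame step) (SpecPos.att p0 {q0}) e0 := by
  constructor
  · rintro ⟨R, hR0, hsym, hsim⟩ e0 hAW
    exact no_attack hsym hsim hAW ⟨q0, rfl, hR0⟩
  · intro h
    refine ⟨fun p q => ¬ AttackerWins (specGame step) (.att p {q}) topE, h topE, ?_, ?_⟩
    · -- symmetry
      intro p q hR hAW
      by_cases hpq : p = q
      · subst hpq; exact hR hAW
      · apply hR
        refine AttackerWins.attack (att_not_defender step p {q})
          (SpecMove.conjChallenge (Set.empty_subset {q})) (applyUpdE_top _) ?_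
        refine AttackerWins.defend ⟨_, _, _, rfl⟩
          (fun g' _ => by rw [applyUpdE_top]; rfl) ?_
        intro g' e' hm happ
        rw [applyUpdE_top] at happ
        obtain rfl : topE = e' := by injection happ
        cases hm with
        | conjRevival h0 => exact absurd rfl h0
        | @conjAnswer _ q' _ _ hq' =>
          obtain rfl : q' = q := by simpa using hq'.1
          exact AttackerWins.attack (attConj_not_defender step p q')
            (SpecMove.negDecision hpq) (applyUpdE_top _) hAW
    · -- simulation
      intro p q hR a p' hp'
      by_contra hno
      push_neg at hno
      apply hR
      refine AttackerWins.attack (att_not_defender step p {q})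
        (SpecMove.obs hp') (applyUpdE_top _) ?_
      refine AttackerWins.attack (att_not_defender step p' _)
        (SpecMove.conjChallenge (Set.empty_subset _)) (applyUpdE_top _) ?_
      refine AttackerWins.defend ⟨_, _, _, rfl⟩
        (fun g' _ => by rw [applyUpdE_top]; rfl) ?_
      intro g' e' hm happ
      rw [applyUpdE_top] at happ
      obtain rfl : topE = e' := by injection happ
      cases hm with
      | conjRevival h0 => exact absurd rfl h0
      | @conjAnswer _ q' _ _ hq' =>
        have hstep : step q a q' := by
          obtain ⟨⟨q'', hq'', hs⟩, -⟩ := hq'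
          obtain rfl : q'' = q := hq''
          exact hs
        have hAW' := hno q' hstep
        exact AttackerWins.attack (attConj_not_defender step p' q')
          SpecMove.posDecision (applyUpdE_top _) hAW'
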